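/- arXiv:2012.13465 — 2 statements merged into one kernel-verified Lean document; each statement's English description precedes it below -/
import Mathlib

section
/- For the asymptotically flat Plebański–Demiański metric with parameters m, a, l, C, Q (a² > l²), and Σ = r² + (l + a cosθ)², the function ψ(r, θ) = Σ·(κ − g^{ij}p_i p_j), with p₀ = −E, p₃ = L_z, evaluated at the ring singularity r = 0, cosθ = −l/a, equals −Q²·((a² − 2alC + l²)E − aL_z)² / ((a² − l²)(a² − l² + Q²)). -/
/-- The function `ψ(r,θ) = Σ (κ − g^{ij} pᵢ pⱼ)` for the asymptotically flat
Plebański–Demiański metric, with `p₀ = −E`, `p₃ = L_z`,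
`Σ = r² + (l + a cos θ)²`, `χ = a sin²θ − 2l(cos θ + C)`,
`Δ_r = r² − 2mr + a² − l² + Q²`, `Σ + aχ = r² + a² + l² − 2alC`, and
separated inverse-metric components `R^{ij}(r)`, `Θ^{ij}(θ)`. -/
noncomputable def PDpsi (m a l C Q E Lz κ r θ : ℝ) : ℝ :=
  (r ^ 2 + (l + a * Real.cos θ) ^ 2) * κ -
    ((-((r ^ 2 + a ^ 2 + l ^ 2 - 2 * a * l * C) ^ 2) * E ^ 2
        + 2 * a * (r ^ 2 + a ^ 2 + l ^ 2 - 2 * a * l * C) * E * Lz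
        - a ^ 2 * Lz ^ 2) / (r ^ 2 - 2 * m * r + a ^ 2 - l ^ 2 + Q ^ 2)
      + ((a * Real.sin θ ^ 2 - 2 * l * (Real.cos θ + C)) * E - Lz) ^ 2
          / Real.sin θ ^ 2)

/-!
At the ring singularity `Σ = 0`, so `ψ = −g^{ij} pᵢ pⱼ`. The radial part is `−X²/Δ_r` with
`X = (a² + l² − 2alC) E − a L_z`; since `sin²θ = (a² − l²)/a²` there, also `aχ = a² + l² − 2alC`,
so the angular part is `X²/(a² − l²)`. The two differ only through `Δ_r(0) − (a² − l²) = Q²`.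
-/

open Real

lemma sin_sq_eq_of_cos_eq_neg_div {a l θ : ℝ} (ha : a ≠ 0) (h : cos θ = -l / a) :
    sin θ ^ 2 = (a ^ 2 - l ^ 2) / a ^ 2 := by
  rw [sin_sq, h]
  field_simp

lemma PDpsi_zero_of_cos_eq_neg_div (m a l C Q E Lz κ θ : ℝ) (ha : l ^ 2 < a ^ 2)
    (h : cos θ = -l / a) :
    PDpsi m a l C Q E Lz κ 0 θ =
      ((a ^ 2 + l ^ 2 - 2 * a * l * C) * E - a * Lz) ^ 2 / (a ^ 2 - l ^ 2 + Q ^ 2) -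
        ((a ^ 2 + l ^ 2 - 2 * a * l * C) * E - a * Lz) ^ 2 / (a ^ 2 - l ^ 2) := by
  have ha0 : a ≠ 0 := by rintro rfl; nlinarith [sq_nonneg l]
  have hal : a ^ 2 - l ^ 2 ≠ 0 := by nlinarith
  have hsigma : l + a * cos θ = 0 := by rw [h]; field_simp; ring
  have hΘ : ((a * sin θ ^ 2 - 2 * l * (cos θ + C)) * E - Lz) ^ 2 / sin θ ^ 2 =
      ((a ^ 2 + l ^ 2 - 2 * a * l * C) * E - a * Lz) ^ 2 / (a ^ 2 - l ^ 2) := by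
    rw [sin_sq_eq_of_cos_eq_neg_div ha0 h, h]
    field_simp
    ring
  unfold PDpsi
  rw [hsigma, hΘ]
  ring

lemma div_sub_div_of_sub_eq {X A B D : ℝ} (hA : A ≠ 0) (hB : B ≠ 0) (h : B - A = D) :
    X / B - X / A = -(D * X) / (A * B) := by
  rw [← h]
  field_simp
  ring

/-- Equation (28): at the ring singularity `r = 0`, `cos θ = −l/a`, the
function `ψ` equals `−Q² ((a² − 2alC + l²) E − a L_z)² / ((a²−l²)(a²−l²+Q²))`. -/
theorem PDpsi_at_ring_singularity (m a l C Q E Lz κ θ₀ : ℝ)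
    (ha : l ^ 2 < a ^ 2) (hQ : 0 < a ^ 2 - l ^ 2 + Q ^ 2)
    (hθ : Real.cos θ₀ = -l / a) :
    PDpsi m a l C Q E Lz κ 0 θ₀ =
      -(Q ^ 2 * ((a ^ 2 - 2 * a * l * C + l ^ 2) * E - a * Lz) ^ 2) /
        ((a ^ 2 - l ^ 2) * (a ^ 2 - l ^ 2 + Q ^ 2)) := by
  rw [PDpsi_zero_of_cos_eq_neg_div m a l C Q E Lz κ θ₀ ha hθ,
    div_sub_div_of_sub_eq (by linarith) hQ.ne' (by ring : _ = Q ^ 2)]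
  ring
end

section
/- For the Plebański–Demiański metric with (a² − 2alC + l²)E = aL_z, both first partial derivatives of ψ(r,θ) = Σ(κ − g^{ij}p_ip_j) with respect to r and θ vanish at r = 0, cosθ = −l/a, and the second derivatives satisfy ∂²_r ψ|_q = 2κ and ∂²_θ ψ|_q = 2κ(a² − l²). -/
section
variable {𝕜 : Type*} [NontriviallyNormedField 𝕜] {g h : 𝕜 → 𝕜} {x : 𝕜}

theorem deriv_sq_mul_of_eq_zero (hg : DifferentiableAt 𝕜 g x) (hh : DifferentiableAt 𝕜 h x)
    (hgx : g x = 0) : deriv (fun y => g y ^ 2 * h y) x = 0 := by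
  rw [deriv_fun_mul (hg.fun_pow 2) hh, deriv_fun_pow hg]
  simp [hgx]

theorem iteratedDeriv_two_sq_of_eq_zero (hg : ContDiffAt 𝕜 2 g x) (hgx : g x = 0) :
    iteratedDeriv 2 (fun y => g y ^ 2) x = 2 * deriv g x ^ 2 := by
  simp only [sq, iteratedDeriv_fun_mul hg hg, Finset.sum_range_succ, Finset.sum_range_zero,
    iteratedDeriv_zero, iteratedDeriv_one]
  simp [hgx, ← two_mul, mul_assoc]

theorem iteratedDeriv_two_sq_mul_of_eq_zero (hg : ContDiffAt 𝕜 2 g x) (hh : ContDiffAt 𝕜 2 h x)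
    (hgx : g x = 0) :
    iteratedDeriv 2 (fun y => g y ^ 2 * h y) x = 2 * deriv g x ^ 2 * h x := by
  simp only [iteratedDeriv_fun_mul (hg.pow 2) hh, Finset.sum_range_succ, Finset.sum_range_zero,
    iteratedDeriv_zero, iteratedDeriv_one, iteratedDeriv_two_sq_of_eq_zero hg hgx,
    deriv_fun_pow (hg.differentiableAt two_ne_zero)]
  simp [hgx]

end

theorem PD_radial_numerator_eq_neg_sq (a l C E Lz r : ℝ)
    (hE : (a ^ 2 - 2 * a * l * C + l ^ 2) * E = a * Lz) :
    -((r ^ 2 + a ^ 2 + l ^ 2 - 2 * a * l * C) ^ 2) * E ^ 2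
        + 2 * a * (r ^ 2 + a ^ 2 + l ^ 2 - 2 * a * l * C) * E * Lz - a ^ 2 * Lz ^ 2 =
      -(r ^ 2 * E) ^ 2 := by
  linear_combination (a * Lz - (2 * r ^ 2 + a ^ 2 + l ^ 2 - 2 * a * l * C) * E) * hE

theorem PD_mul_chi_mul_E_sub_Lz_eq (a l C E Lz θ : ℝ)
    (hE : (a ^ 2 - 2 * a * l * C + l ^ 2) * E = a * Lz) :
    a * ((a * Real.sin θ ^ 2 - 2 * l * (Real.cos θ + C)) * E - Lz) =
      -((l + a * Real.cos θ) ^ 2 * E) := by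
  linear_combination (a ^ 2 * E) * Real.sin_sq_add_cos_sq θ + hE

theorem PDpsi_radial_eq_sq_mul {m a l C Q E Lz κ θ₀ : ℝ} (ha : a ≠ 0)
    (hE : (a ^ 2 - 2 * a * l * C + l ^ 2) * E = a * Lz) (hθ : l + a * Real.cos θ₀ = 0) :
    (fun r => PDpsi m a l C Q E Lz κ r θ₀) = fun r =>
      r ^ 2 * (κ + r ^ 2 * E ^ 2 / (r ^ 2 - 2 * m * r + a ^ 2 - l ^ 2 + Q ^ 2)) := by
  have hu : (a * Real.sin θ₀ ^ 2 - 2 * l * (Real.cos θ₀ + C)) * E - Lz = 0 := by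
    simpa [hθ, ha] using PD_mul_chi_mul_E_sub_Lz_eq a l C E Lz θ₀ hE
  funext r
  rw [PDpsi, PD_radial_numerator_eq_neg_sq a l C E Lz r hE, hu, hθ]
  ring

theorem PDpsi_angular_eq_sq_mul {m a l C Q E Lz κ : ℝ} (ha : a ≠ 0)
    (hE : (a ^ 2 - 2 * a * l * C + l ^ 2) * E = a * Lz) :
    (fun θ => PDpsi m a l C Q E Lz κ 0 θ) = fun θ =>
      (l + a * Real.cos θ) ^ 2 * (κ - ((l + a * Real.cos θ) * E / (a * Real.sin θ)) ^ 2) := by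
  funext θ
  have hu : (a * Real.sin θ ^ 2 - 2 * l * (Real.cos θ + C)) * E - Lz =
      -((l + a * Real.cos θ) ^ 2 * E) / a := by
    rw [← PD_mul_chi_mul_E_sub_Lz_eq a l C E Lz θ hE]; field_simp
  rw [PDpsi, PD_radial_numerator_eq_neg_sq a l C E Lz 0 hE, hu]
  ring

theorem PDpsi_second_derivs_general (m a l C Q E Lz κ θ₀ : ℝ)
    (ha : l ^ 2 < a ^ 2) (hQ : 0 < a ^ 2 - l ^ 2 + Q ^ 2)
    (hθ : Real.cos θ₀ = -l / a)
    (hE : (a ^ 2 - 2 * a * l * C + l ^ 2) * E = a * Lz) :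
    deriv (fun r => PDpsi m a l C Q E Lz κ r θ₀) 0 = 0 ∧
    deriv (fun θ => PDpsi m a l C Q E Lz κ 0 θ) θ₀ = 0 ∧
    iteratedDeriv 2 (fun r => PDpsi m a l C Q E Lz κ r θ₀) 0 = 2 * κ ∧
    iteratedDeriv 2 (fun θ => PDpsi m a l C Q E Lz κ 0 θ) θ₀ =
      2 * κ * (a ^ 2 - l ^ 2) := by
  have ha0 : a ≠ 0 := by rintro rfl; nlinarith [sq_nonneg l]
  have hring : l + a * Real.cos θ₀ = 0 := by rw [hθ]; field_simp; ring
  have hsin : a ^ 2 * Real.sin θ₀ ^ 2 = a ^ 2 - l ^ 2 := by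
    linear_combination a ^ 2 * Real.sin_sq_add_cos_sq θ₀ - (a * Real.cos θ₀ - l) * hring
  have hsin0 : a * Real.sin θ₀ ≠ 0 := by
    intro h; nlinarith
  have hΔ : (0:ℝ) ^ 2 - 2 * m * 0 + a ^ 2 - l ^ 2 + Q ^ 2 ≠ 0 := by
    simpa [add_sub_right_comm] using hQ.ne'
  have hradial : ContDiffAt ℝ 2
      (fun r : ℝ => κ + r ^ 2 * E ^ 2 / (r ^ 2 - 2 * m * r + a ^ 2 - l ^ 2 + Q ^ 2)) 0 := by
    fun_prop (disch := exact hΔ)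
  have hangular : ContDiffAt ℝ 2
      (fun θ => κ - ((l + a * Real.cos θ) * E / (a * Real.sin θ)) ^ 2) θ₀ := by
    fun_prop (disch := exact hsin0)
  rw [PDpsi_radial_eq_sq_mul ha0 hE hring, PDpsi_angular_eq_sq_mul ha0 hE]
  refine ⟨deriv_sq_mul_of_eq_zero (by fun_prop) (hradial.differentiableAt two_ne_zero) rfl,
    deriv_sq_mul_of_eq_zero (by fun_prop) (hangular.differentiableAt two_ne_zero) hring, ?_, ?_⟩
  · rw [iteratedDeriv_two_sq_mul_of_eq_zero (g := fun r => r) (by fun_prop) hradial rfl]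
    simp
  · have hderiv : deriv (fun θ => l + a * Real.cos θ) θ₀ = -(a * Real.sin θ₀) := by simp
    rw [iteratedDeriv_two_sq_mul_of_eq_zero (by fun_prop) hangular hring, hderiv, hring]
    linear_combination 2 * κ * hsin

/-- Equation (29): with `(a² − 2alC + l²) E = a L_z`, the first derivatives of
`ψ` in `r` and `θ` vanish at the ring singularity and the second derivatives
equal `2κ` and `2κ (a² − l²)` respectively. -/
theorem PDpsi_second_derivs (m a l C Q E Lz κ θ₀ : ℝ)
    (ha : l ^ 2 < a ^ 2) (hQ : 0 < a ^ 2 - l ^ 2 + Q ^ 2)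
    (hθ : Real.cos θ₀ = -l / a) (hκ : κ = 0 ∨ κ = -1)
    (hE : (a ^ 2 - 2 * a * l * C + l ^ 2) * E = a * Lz) :
    deriv (fun r => PDpsi m a l C Q E Lz κ r θ₀) 0 = 0 ∧
    deriv (fun θ => PDpsi m a l C Q E Lz κ 0 θ) θ₀ = 0 ∧
    iteratedDeriv 2 (fun r => PDpsi m a l C Q E Lz κ r θ₀) 0 = 2 * κ ∧
    iteratedDeriv 2 (fun θ => PDpsi m a l C Q E Lz κ 0 θ) θ₀ =
      2 * κ * (a ^ 2 - l ^ 2) :=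
  PDpsi_second_derivs_general m a l C Q E Lz κ θ₀ ha hQ hθ hE
end
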